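/- arXiv:1309.1943 — 3 statements merged into one kernel-verified Lean document; each statement's English description precedes it below -/
import Mathlib

section
/- For all real α ≥ 2 and x ∈ [0,1], one has 1 - x^α ≤ (1+x)^{α-1} (1-x). -/
/-!
Two applications of Bernoulli's inequality `1 + b s ≤ (1 + s) ^ b` (for `b = α - 1 ≥ 1`, `s ≥ -1`):
at `s = x - 1` it gives `x ^ α = x * x ^ b ≥ x * (1 + b (x - 1))`, so that
`1 - x ^ α ≤ (1 - x) (1 + b x)`, and at `s = x` it gives `1 + b x ≤ (1 + x) ^ b`.
-/

theorem one_sub_rpow_le (α x : ℝ) (hα : 2 ≤ α) (hx : x ∈ Set.Icc (0:ℝ) 1) :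
    1 - x ^ α ≤ (1 + x) ^ (α - 1) * (1 - x) := by
  obtain ⟨hx0, hx1⟩ := hx
  have hb : 1 ≤ α - 1 := by linarith
  have bernoulli_at_x : 1 + (α - 1) * x ≤ (1 + x) ^ (α - 1) :=
    one_add_mul_self_le_rpow_one_add (by linarith) hb
  have bernoulli_at_x_sub_one : 1 + (α - 1) * (x - 1) ≤ x ^ (α - 1) := by
    simpa using one_add_mul_self_le_rpow_one_add (s := x - 1) (by linarith) hb
  have rpow_eq : x ^ α = x * x ^ (α - 1) := by
    conv_lhs => rw [← sub_add_cancel α 1]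
    rw [Real.rpow_add' hx0 (by linarith), Real.rpow_one, mul_comm]
  calc 1 - x ^ α ≤ 1 - x * (1 + (α - 1) * (x - 1)) := by
        rw [rpow_eq]; gcongr
    _ = (1 + (α - 1) * x) * (1 - x) := by ring
    _ ≤ (1 + x) ^ (α - 1) * (1 - x) := by gcongr
end

section
/- For α > 1 and x > 0, one has x^{1-1/α} ∫₁^∞ (u-1)^{1/α} / (u(u+x)) du ≤ π / sin(π/α). -/
open Real MeasureTheory

/-!
Write `s = 1/α ∈ (0, 1)`. Since `u (u + x) ≥ (u - 1)(u - 1 + x)` for `u > 1`, the integral is at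
most `∫_1^∞ (u-1)^(s-1) / (u-1+x) du`. The substitution `u = 1 + x y / (1 - y)` turns this into
`x^(s-1) B(s, 1-s) = x^(s-1) Γ(s) Γ(1-s) = x^(s-1) π / sin (π s)`, and the factor `x^(1-s)`
cancels the power of `x`.
-/

lemma ofReal_betaIntegrand {s y : ℝ} (hy : y ∈ Set.Ioo (0:ℝ) 1) :
    (y : ℂ) ^ ((s : ℂ) - 1) * (1 - (y : ℂ)) ^ (1 - (s : ℂ) - 1) =
      ((y ^ (s - 1) * (1 - y) ^ (-s) : ℝ) : ℂ) := by
  push_cast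
  rw [Complex.ofReal_cpow hy.1.le, Complex.ofReal_cpow (sub_nonneg.2 hy.2.le)]
  push_cast
  ring_nf

lemma integrableOn_rpow_mul_one_sub_rpow_neg {s : ℝ} (h0 : 0 < s) (h1 : s < 1) :
    IntegrableOn (fun y => y ^ (s - 1) * (1 - y) ^ (-s)) (Set.Ioo (0:ℝ) 1) := by
  have hC := (Complex.betaIntegral_convergent (u := s) (v := 1 - s)
    (by simpa using h0) (by simp [h1])).1.mono_set Set.Ioo_subset_Ioc_self
  refine IntegrableOn.congr_fun hC.re (fun y hy => ?_) measurableSet_Ioo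
  simp only [ofReal_betaIntegrand hy, RCLike.re_to_complex, Complex.ofReal_re]

lemma integral_rpow_mul_one_sub_rpow_neg {s : ℝ} (h0 : 0 < s) (h1 : s < 1) :
    ∫ y in Set.Ioo (0:ℝ) 1, y ^ (s - 1) * (1 - y) ^ (-s) = π / sin (π * s) := by
  have hB := Complex.Gamma_mul_Gamma_eq_betaIntegral (s := s) (t := 1 - s)
    (by simpa using h0) (by simp [h1])
  rw [Complex.Gamma_mul_Gamma_one_sub, add_sub_cancel, Complex.Gamma_one, one_mul,
    Complex.betaIntegral, intervalIntegral.integral_of_le zero_le_one,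
    integral_Ioc_eq_integral_Ioo, setIntegral_congr_fun measurableSet_Ioo
      (fun y hy => ofReal_betaIntegrand (s := s) hy), integral_complex_ofReal] at hB
  exact_mod_cast hB.symm

section Substitution

variable {s x : ℝ}

lemma hasDerivAt_one_add_mul_div_one_sub {y : ℝ} (hy : y ≠ 1) :
    HasDerivAt (fun y : ℝ => 1 + x * y / (1 - y)) (x / (1 - y) ^ 2) y := by
  have hy' : 1 - y ≠ 0 := sub_ne_zero.2 hy.symm
  refine ((((hasDerivAt_id' y).const_mul x).fun_div
    ((hasDerivAt_id' y).const_sub 1) hy').const_add 1).congr_deriv ?_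
  ring

lemma strictMonoOn_one_add_mul_div_one_sub (hx : 0 < x) :
    StrictMonoOn (fun y : ℝ => 1 + x * y / (1 - y)) (Set.Iio 1) := by
  intro a ha b hb hab
  have ha' : 0 < 1 - a := sub_pos.2 ha
  have hb' : 0 < 1 - b := sub_pos.2 hb
  simp only [add_lt_add_iff_left]
  rw [div_lt_div_iff₀ ha' hb']
  nlinarith

lemma image_one_add_mul_div_one_sub (hx : 0 < x) :
    (fun y : ℝ => 1 + x * y / (1 - y)) '' Set.Ioo 0 1 = Set.Ioi 1 := by
  ext u
  constructor
  · rintro ⟨y, ⟨hy0, hy1⟩, rfl⟩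
    have : 0 < 1 - y := sub_pos.2 hy1
    simp only [Set.mem_Ioi, lt_add_iff_pos_right]
    positivity
  · intro hu
    have hu' : 0 < u - 1 := sub_pos.2 hu
    refine ⟨(u - 1) / (u - 1 + x),
      ⟨by positivity, (div_lt_one (by positivity)).2 (by linarith)⟩, ?_⟩
    have : 1 - (u - 1) / (u - 1 + x) = x / (u - 1 + x) := by field_simp; ring
    simp only [this]
    field_simp
    ring

lemma abs_deriv_mul_rpow_div_of_substitution (hx : 0 < x) {y : ℝ}
    (hy : y ∈ Set.Ioo (0:ℝ) 1) :
    |x / (1 - y) ^ 2| • ((1 + x * y / (1 - y) - 1) ^ (s - 1) / (1 + x * y / (1 - y) - 1 + x)) =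
      x ^ (s - 1) * (y ^ (s - 1) * (1 - y) ^ (-s)) := by
  obtain ⟨hy0, hy1⟩ := hy
  have hc : 0 < 1 - y := sub_pos.2 hy1
  have hshift : 1 + x * y / (1 - y) - 1 + x = x / (1 - y) := by field_simp; ring
  rw [hshift, add_sub_cancel_left, smul_eq_mul, abs_of_pos (by positivity),
    div_rpow (by positivity) hc.le, mul_rpow hx.le hy0.le, rpow_neg hc.le,
    rpow_sub_one hc.ne']
  field_simp

lemma integrableOn_and_integral_rpow_sub_one_div_add (h0 : 0 < s) (h1 : s < 1) (hx : 0 < x) :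
    IntegrableOn (fun u : ℝ => (u - 1) ^ (s - 1) / (u - 1 + x)) (Set.Ioi 1) ∧
      ∫ u in Set.Ioi (1:ℝ), (u - 1) ^ (s - 1) / (u - 1 + x) =
        x ^ (s - 1) * (π / sin (π * s)) := by
  have hderiv : ∀ y ∈ Set.Ioo (0:ℝ) 1, HasDerivWithinAt (fun y : ℝ => 1 + x * y / (1 - y))
      (x / (1 - y) ^ 2) (Set.Ioo 0 1) y :=
    fun y hy => (hasDerivAt_one_add_mul_div_one_sub hy.2.ne).hasDerivWithinAt
  have hinj : Set.InjOn (fun y : ℝ => 1 + x * y / (1 - y)) (Set.Ioo 0 1) :=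
    ((strictMonoOn_one_add_mul_div_one_sub hx).mono Set.Ioo_subset_Iio_self).injOn
  have hsubst : Set.EqOn (fun y => |x / (1 - y) ^ 2| •
      (fun u : ℝ => (u - 1) ^ (s - 1) / (u - 1 + x)) (1 + x * y / (1 - y)))
      (fun y => x ^ (s - 1) * (y ^ (s - 1) * (1 - y) ^ (-s))) (Set.Ioo 0 1) :=
    fun y hy => abs_deriv_mul_rpow_div_of_substitution hx hy
  rw [← image_one_add_mul_div_one_sub hx,
    integrableOn_image_iff_integrableOn_abs_deriv_smul measurableSet_Ioo hderiv hinj,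
    integral_image_eq_integral_abs_deriv_smul measurableSet_Ioo hderiv hinj,
    integrableOn_congr_fun hsubst measurableSet_Ioo,
    setIntegral_congr_fun measurableSet_Ioo hsubst,
    integral_const_mul, integral_rpow_mul_one_sub_rpow_neg h0 h1]
  exact ⟨(integrableOn_rpow_mul_one_sub_rpow_neg h0 h1).const_mul _, rfl⟩

end Substitution

lemma rpow_sub_one_div_mul_le {s x u : ℝ} (hx : 0 ≤ x) (hu : 1 < u) :
    (u - 1) ^ s / (u * (u + x)) ≤ (u - 1) ^ (s - 1) / (u - 1 + x) := by
  have hu' : 0 < u - 1 := sub_pos.2 hu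
  rw [rpow_sub_one hu'.ne', div_div]
  gcongr <;> linarith

theorem W_bound (α x : ℝ) (hα : 1 < α) (hx : 0 < x) :
    x ^ (1 - 1/α) * ∫ u in Set.Ioi (1:ℝ), (u - 1) ^ (1/α) / (u * (u + x)) ≤
      π / Real.sin (π / α) := by
  set s := 1 / α
  have h0 : 0 < s := by positivity
  have h1 : s < 1 := (div_lt_one (by positivity)).2 hα
  obtain ⟨hint, hval⟩ := integrableOn_and_integral_rpow_sub_one_div_add h0 h1 hx
  have hmono : ∫ u in Set.Ioi (1:ℝ), (u - 1) ^ s / (u * (u + x)) ≤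
      ∫ u in Set.Ioi (1:ℝ), (u - 1) ^ (s - 1) / (u - 1 + x) := by
    refine integral_mono_of_nonneg ?_ hint ?_ <;>
      filter_upwards [ae_restrict_mem measurableSet_Ioi] with u (hu : 1 < u)
    · have : 0 ≤ u - 1 := by linarith
      positivity
    · exact rpow_sub_one_div_mul_le hx.le hu
  calc x ^ (1 - s) * ∫ u in Set.Ioi (1:ℝ), (u - 1) ^ s / (u * (u + x))
      ≤ x ^ (1 - s) * (x ^ (s - 1) * (π / sin (π * s))) := by
        rw [← hval]; gcongr
    _ = π / sin (π / α) := by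
        rw [← mul_assoc, ← rpow_add hx, sub_add_sub_cancel, sub_self, rpow_zero, one_mul,
          mul_one_div]
end

section
/- Let σ_ν(t) = exp(-ν/(1-t²)) for |t| < 1 (and 0 outside), with ν > 0. For t ∈ [0,1), set ρ = 1-t and z = t + ρe^{iθ} with θ ∈ (-π,π). Then Re(1/(1-z²)) ≥ 1/(4ρ) + 1/4. -/
/-!
With `w = e^{iθ}` and `ρ = 1 - t`, partial fractions give
`1/(1 - z²) = (1/(1 - z) + 1/(1 + z))/2`, where `1 - z = ρ(1 - w)` and `1 + z = (1 + t) + ρw`.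
Since `|w| = 1`, `Re 1/(1 - w) = 1/2`; and inversion maps the circle `(1 + t) + ρ S¹`, which lies
in the closed right half-plane, to a circle symmetric about `ℝ` whose leftmost point is
`1/((1 + t) + ρ) = 1/2`.
-/

open Real Complex

namespace Complex

lemma normSq_ofReal_add_ofReal_mul {a r : ℝ} {w : ℂ} (hw : ‖w‖ = 1) :
    normSq (a + r * w) = a ^ 2 + 2 * a * r * w.re + r ^ 2 := by
  have hw2 : normSq w = 1 := by rw [normSq_eq_norm_sq, hw, one_pow]
  rw [normSq_apply] at hw2
  simp only [normSq_apply, add_re, add_im, mul_re, mul_im, ofReal_re, ofReal_im]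
  linear_combination r ^ 2 * hw2

lemma re_inv_one_sub_of_norm_eq_one {w : ℂ} (hw : ‖w‖ = 1) (hw1 : w ≠ 1) :
    (1 - w)⁻¹.re = 1 / 2 := by
  have hN : normSq (1 - w) = 2 * (1 - w.re) := by
    rw [show 1 - w = ((1 : ℝ) : ℂ) + ((-1 : ℝ) : ℂ) * w by push_cast; ring,
      normSq_ofReal_add_ofReal_mul hw]
    ring
  have hN0 : normSq (1 - w) ≠ 0 := (normSq_pos.mpr (sub_ne_zero.mpr hw1.symm)).ne'
  have hc : 1 - w.re ≠ 0 := right_ne_zero_of_mul (hN ▸ hN0)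
  rw [inv_re, hN, sub_re, one_re]
  field_simp

lemma ofReal_add_ofReal_mul_ne_zero {a r : ℝ} {w : ℂ} (hw : ‖w‖ = 1) (hw1 : w ≠ -1)
    (ha : 0 < a) (hr : 0 ≤ r) : (a : ℂ) + r * w ≠ 0 := by
  intro h
  have hra : r = a := by
    simpa [norm_mul, hw, abs_of_nonneg, ha.le, hr] using
      congrArg norm (eq_neg_of_add_eq_zero_right h)
  rw [hra, ← mul_one_add, mul_eq_zero, ofReal_eq_zero, add_comm, add_eq_zero_iff_eq_neg] at h
  exact hw1 (h.resolve_left ha.ne')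

lemma inv_add_le_re_inv_ofReal_add_ofReal_mul {a r : ℝ} {w : ℂ} (hw : ‖w‖ = 1) (hr : 0 ≤ r)
    (hra : r ≤ a) (hne : (a : ℂ) + r * w ≠ 0) : (a + r)⁻¹ ≤ ((a : ℂ) + r * w)⁻¹.re := by
  have hN0 : 0 < normSq ((a : ℂ) + r * w) := normSq_pos.mpr hne
  have hc : w.re ≤ 1 := (re_le_norm w).trans hw.le
  have har : 0 < a + r := by
    by_contra! h
    obtain rfl : r = 0 := by linarith
    obtain rfl : a = 0 := by linarith
    simp at hne
  rw [normSq_ofReal_add_ofReal_mul hw] at hN0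
  rw [inv_re, normSq_ofReal_add_ofReal_mul hw, add_re, mul_re, ofReal_re, ofReal_re, ofReal_im,
    zero_mul, sub_zero, inv_eq_one_div, div_le_div_iff₀ har hN0]
  -- `(a + r c)(a + r) - |a + r w|² = r (a - r) (1 - c)` with `c = Re w`
  nlinarith [mul_nonneg (mul_nonneg hr (sub_nonneg.mpr hra)) (sub_nonneg.mpr hc)]

lemma inv_one_sub_sq {z : ℂ} (h1 : 1 - z ≠ 0) (h2 : 1 + z ≠ 0) :
    (1 - z ^ 2)⁻¹ = ((1 - z)⁻¹ + (1 + z)⁻¹) / 2 := by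
  rw [show 1 - z ^ 2 = (1 - z) * (1 + z) by ring]
  field_simp
  ring

lemma arg_exp_ofReal_mul_I {θ : ℝ} (hθ : θ ∈ Set.Ioc (-π) π) : arg (exp (θ * I)) = θ := by
  rw [arg_exp_mul_I, toIocMod_eq_self]
  exact ⟨hθ.1, by linarith [hθ.2]⟩

end Complex

theorem re_one_div_one_sub_sq (t θ : ℝ) (ht : t ∈ Set.Ico (0:ℝ) 1)
    (hθ : θ ∈ Set.Ioo (-π) π) (hθ0 : θ ≠ 0) :
    1 / (4 * (1 - t)) + 1 / 4 ≤
      ((1 / (1 - ((t : ℂ) + (1 - t) * Complex.exp (θ * Complex.I)) ^ 2)).re) := by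
  obtain ⟨ht0, ht1⟩ := ht
  set w := exp (θ * I)
  have hw : ‖w‖ = 1 := norm_exp_ofReal_mul_I θ
  have harg : arg w = θ := arg_exp_ofReal_mul_I ⟨hθ.1, hθ.2.le⟩
  have hw1 : w ≠ 1 := fun h => hθ0 (by rw [← harg, h, arg_one])
  have hwneg : w ≠ -1 := fun h => hθ.2.ne (by rw [← harg, h, arg_neg_one])
  have hsub : 1 - ((t : ℂ) + (1 - t) * w) = ((1 - t : ℝ) : ℂ) * (1 - w) := by push_cast; ring
  have hadd : 1 + ((t : ℂ) + (1 - t) * w) = ((1 + t : ℝ) : ℂ) + ((1 - t : ℝ) : ℂ) * w := by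
    push_cast; ring
  have hadd0 :=
    ofReal_add_ofReal_mul_ne_zero hw hwneg (by linarith : 0 < 1 + t) (by linarith : 0 ≤ 1 - t)
  have hsub0 : ((1 - t : ℝ) : ℂ) * (1 - w) ≠ 0 :=
    mul_ne_zero (ofReal_ne_zero.mpr (by linarith)) (sub_ne_zero.mpr hw1.symm)
  have hcircle := inv_add_le_re_inv_ofReal_add_ofReal_mul hw (by linarith) (by linarith) hadd0
  rw [one_div (1 - _), inv_one_sub_sq (hsub ▸ hsub0) (hadd ▸ hadd0), hsub, hadd, mul_inv,
    ← ofReal_inv, div_ofNat_re, add_re, re_ofReal_mul, re_inv_one_sub_of_norm_eq_one hw hw1]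
  rw [show (1 + t + (1 - t))⁻¹ = (1 / 2 : ℝ) by ring] at hcircle
  have hquarter : 1 / (4 * (1 - t)) = (1 - t)⁻¹ * (1 / 2) / 2 := by rw [one_div, mul_inv]; ring
  linarith
end
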